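/- arXiv:1205.4757 — 5 statements merged into one kernel-verified Lean document; each statement's English description precedes it below -/
import Mathlib

section
/- If G is a finite non-abelian group, then the number of pairs (g,h) in G × G with g*h = h*g is at most (5/8)·|G|². -/
open Subgroup

theorem commuting_pairs_le_five_eighths (G : Type*) [Group G] [Finite G]
    (h : ¬ ∀ g h : G, g * h = h * g) :
    (Nat.card { p : G × G // p.1 * p.2 = p.2 * p.1 } : ℚ) ≤
      5 / 8 * (Nat.card G : ℚ) ^ 2 := by
  classical
  have := Fintype.ofFinite G
  set n : ℕ := Nat.card G with hn
  have hn0 : 0 < n := Nat.card_pos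
  -- index of the center is at least 4
  have hidx4 : 4 ≤ (center G).index := by
    by_contra hlt
    push_neg at hlt
    have h0 : (center G).index ≠ 0 := Subgroup.index_ne_zero_of_finite
    have hq : Nat.card (G ⧸ center G) = (center G).index := (Subgroup.index_eq_card _).symm
    have hcyc : IsCyclic (G ⧸ center G) := by
      have h123 : (center G).index = 1 ∨ (center G).index = 2 ∨ (center G).index = 3 := by omega
      rcases h123 with hi | hi | hi
      · exact isCyclic_of_card_dvd_prime (p := 2) (by rw [hq, hi]; exact one_dvd 2)
      · exact isCyclic_of_card_dvd_prime (p := 2) (by rw [hq, hi])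
      · exact isCyclic_of_card_dvd_prime (p := 3) (by rw [hq, hi])
    exact h (commutative_of_cyclic_center_quotient (QuotientGroup.mk' (center G))
      (le_of_eq (QuotientGroup.ker_mk' _)))
  -- card of center ≤ n / 4
  have hz : (Nat.card (center G) : ℚ) * 4 ≤ (n : ℚ) := by
    have := (center G).card_mul_index
    have : Nat.card (center G) * 4 ≤ n := by
      calc Nat.card (center G) * 4 ≤ Nat.card (center G) * (center G).index :=
            Nat.mul_le_mul_left _ hidx4
        _ = n := (center G).card_mul_index
    exact_mod_cast this
  -- for noncentral g, centralizer has card ≤ n / 2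
  have hcent : ∀ g : G, g ∉ center G →
      (Nat.card (centralizer ({g} : Set G)) : ℚ) * 2 ≤ (n : ℚ) := by
    intro g hg
    have hne : centralizer ({g} : Set G) ≠ ⊤ := by
      intro htop
      apply hg
      rw [Subgroup.mem_center_iff]
      intro k
      have : k ∈ centralizer ({g} : Set G) := htop ▸ Subgroup.mem_top k
      exact (Subgroup.mem_centralizer_singleton_iff.mp this)
    have h1 : (centralizer ({g} : Set G)).index ≠ 1 := fun h1 =>
      hne (Subgroup.index_eq_one.mp h1)
    have h0 : (centralizer ({g} : Set G)).index ≠ 0 := Subgroup.index_ne_zero_of_finite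
    have h2 : 2 ≤ (centralizer ({g} : Set G)).index := by omega
    have : Nat.card (centralizer ({g} : Set G)) * 2 ≤ n := by
      calc Nat.card (centralizer ({g} : Set G)) * 2
          ≤ Nat.card (centralizer ({g} : Set G)) * (centralizer ({g} : Set G)).index :=
            Nat.mul_le_mul_left _ h2
        _ = n := (centralizer ({g} : Set G)).card_mul_index
    exact_mod_cast this
  -- rewrite the count as a sum of centralizer cardinalities
  have hequiv : { p : G × G // p.1 * p.2 = p.2 * p.1 } ≃
      Σ g : G, {h : G // h ∈ centralizer ({g} : Set G)} :=
    { toFun := fun p => ⟨p.1.1, p.1.2, Subgroup.mem_centralizer_singleton_iff.mpr p.2.symm⟩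
      invFun := fun s => ⟨(s.1, s.2.1), (Subgroup.mem_centralizer_singleton_iff.mp s.2.2).symm⟩
      left_inv := fun p => rfl
      right_inv := fun s => rfl }
  have hcard : Nat.card { p : G × G // p.1 * p.2 = p.2 * p.1 } =
      ∑ g : G, Nat.card (centralizer ({g} : Set G)) := by
    rw [Nat.card_congr hequiv]
    simp [Nat.card_eq_fintype_card, Fintype.card_sigma]
  rw [hcard]
  push_cast
  set z : ℚ := (Nat.card (center G) : ℚ) with hzdef
  have hsum : ∑ g : G, (Nat.card (centralizer ({g} : Set G)) : ℚ) ≤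
      z * n + ((n : ℚ) - z) * (n / 2) := by
    have hsplit : ∑ g : G, (Nat.card (centralizer ({g} : Set G)) : ℚ)
        ≤ ∑ g : G, (if g ∈ center G then (n : ℚ) else (n : ℚ) / 2) := by
      apply Finset.sum_le_sum
      intro g _
      by_cases hg : g ∈ center G
      · simp only [hg, if_true]
        have : Nat.card (centralizer ({g} : Set G)) ≤ n := Nat.card_le_card_of_injective
          (fun x => x.1) (fun a b hab => Subtype.ext hab)
        exact_mod_cast this
      · simp only [hg, if_false]
        linarith [hcent g hg]
    have hcount : (Finset.univ.filter (fun g : G => g ∈ center G)).card = Nat.card (center G) := by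
      rw [Nat.card_eq_fintype_card, Fintype.card_subtype]
    calc ∑ g : G, (Nat.card (centralizer ({g} : Set G)) : ℚ)
        ≤ ∑ g : G, (if g ∈ center G then (n : ℚ) else (n : ℚ) / 2) := hsplit
      _ = z * n + ((n : ℚ) - z) * (n / 2) := by
          rw [Finset.sum_ite, Finset.sum_const, Finset.sum_const, hcount]
          have : (Finset.univ.filter (fun g : G => ¬ g ∈ center G)).card
              = n - Nat.card (center G) := by
            have := Finset.card_filter_add_card_filter_not
              (s := (Finset.univ : Finset G)) (p := fun g : G => g ∈ center G)
            simp only [Finset.card_univ, ← Nat.card_eq_fintype_card] at this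
            omega
          rw [this]
          have hle : Nat.card (center G) ≤ n := by
            have h0z : (0:ℚ) ≤ (Nat.card (center G) : ℚ) := by positivity
            have hq' : (Nat.card (center G) : ℚ) ≤ (n : ℚ) := by linarith
            exact_mod_cast hq'
          simp only [nsmul_eq_mul]
          rw [hzdef, Nat.cast_sub hle]
  have hn0' : (0 : ℚ) ≤ (n : ℚ) := by positivity
  nlinarith [hsum, hz, hn0']
end

section
/- If G is a finite group and the number of commuting pairs (g,h) in G × G is strictly greater than (5/8)·|G|², then G is abelian. -/
open Subgroup

theorem abelian_of_commuting_pairs_gt_five_eighths (G : Type*) [Group G] [Finite G]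
    (h : (Nat.card { p : G × G // p.1 * p.2 = p.2 * p.1 } : ℚ) >
      5 / 8 * (Nat.card G : ℚ) ^ 2) :
    ∀ g h : G, g * h = h * g := by
  classical
  by_contra hna
  push_neg at hna
  have := Fintype.ofFinite G
  set n := Nat.card G with hn
  -- center is not everything
  have hcent_ne_top : center G ≠ ⊤ := by
    intro htop
    obtain ⟨a, b, hab⟩ := hna
    exact hab ((Subgroup.mem_center_iff.mp (htop ▸ Subgroup.mem_top a)) b).symm
  -- quotient by center is not cyclic of prime card 2 or 3, so index ≥ 4
  have hidx : 4 ≤ (center G).index := by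
    by_contra hlt
    push_neg at hlt
    interval_cases hi : (center G).index
    · exact Subgroup.index_ne_zero_of_finite hi
    · exact hcent_ne_top (Subgroup.index_eq_one.mp hi)
    · obtain ⟨a, b, hab⟩ := hna
      have hcard : Nat.card (G ⧸ center G) = 2 := hi
      have hf : Fact (Nat.Prime 2) := ⟨Nat.prime_two⟩
      have : IsCyclic (G ⧸ center G) := isCyclic_of_prime_card hcard
      exact hab (commutative_of_cyclic_center_quotient (QuotientGroup.mk' (center G))
        (le_of_eq (QuotientGroup.ker_mk' _)) a b)
    · obtain ⟨a, b, hab⟩ := hna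
      have hcard : Nat.card (G ⧸ center G) = 3 := hi
      have hf : Fact (Nat.Prime 3) := ⟨Nat.prime_three⟩
      have : IsCyclic (G ⧸ center G) := isCyclic_of_prime_card hcard
      exact hab (commutative_of_cyclic_center_quotient (QuotientGroup.mk' (center G))
        (le_of_eq (QuotientGroup.ker_mk' _)) a b)
  have hZ4 : 4 * Nat.card (center G) ≤ n := by
    calc 4 * Nat.card (center G) ≤ (center G).index * Nat.card (center G) :=
          Nat.mul_le_mul_right _ hidx
      _ = n := by rw [mul_comm]; exact (center G).card_mul_index
  -- count commuting pairs as a sum of centralizer sizes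
  have hcount : Nat.card { p : G × G // p.1 * p.2 = p.2 * p.1 } =
      ∑ g : G, Nat.card { x : G // g * x = x * g } := by
    rw [Nat.card_congr (Equiv.subtypeProdEquivSigmaSubtype fun a b : G => a * b = b * a)]
    simp [Nat.card_eq_fintype_card]
  -- bound each centralizer
  have hbound : ∀ g : G, g ∉ center G → 2 * Nat.card { x : G // g * x = x * g } ≤ n := by
    intro g hg
    have hcard_eq : Nat.card { x : G // g * x = x * g } =
        Nat.card (Subgroup.centralizer {g}) := by
      apply Nat.card_congr
      apply Equiv.subtypeEquivRight
      intro x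
      simp [Subgroup.mem_centralizer_singleton_iff, eq_comm]
    rw [hcard_eq]
    have hne_top : Subgroup.centralizer {g} ≠ ⊤ := by
      intro htop
      apply hg
      rw [Subgroup.mem_center_iff]
      intro m
      have : m ∈ Subgroup.centralizer {g} := htop ▸ Subgroup.mem_top m
      exact (Subgroup.mem_centralizer_singleton_iff.mp this)
    have hidx2 : 2 ≤ (Subgroup.centralizer {g}).index := by
      rcases Nat.lt_or_ge (Subgroup.centralizer {g}).index 2 with hlt | hge
      · interval_cases hi : (Subgroup.centralizer {g}).index
        · exact absurd hi (Subgroup.index_ne_zero_of_finite)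
        · exact absurd (Subgroup.index_eq_one.mp hi) hne_top
      · exact hge
    calc 2 * Nat.card (Subgroup.centralizer {g})
        ≤ (Subgroup.centralizer {g}).index * Nat.card (Subgroup.centralizer {g}) :=
          Nat.mul_le_mul_right _ hidx2
      _ = n := by rw [mul_comm]; exact (Subgroup.centralizer {g}).card_mul_index
  have hbound' : ∀ g : G, Nat.card { x : G // g * x = x * g } ≤ n := by
    intro g
    have : Nat.card { x : G // g * x = x * g } ≤ Nat.card G :=
      Nat.card_le_card_of_injective _ Subtype.val_injective
    exact this
  -- main counting inequality: 8 * count ≤ 5 * n^2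
  have key : 8 * Nat.card { p : G × G // p.1 * p.2 = p.2 * p.1 } ≤ 5 * n ^ 2 := by
    rw [hcount]
    have hsplit : ∑ g : G, Nat.card { x : G // g * x = x * g } =
        (∑ g ∈ Finset.univ.filter (· ∈ center G), Nat.card { x : G // g * x = x * g }) +
        (∑ g ∈ Finset.univ.filter (· ∉ center G), Nat.card { x : G // g * x = x * g }) :=
      (Finset.sum_filter_add_sum_filter_not _ _ _).symm
    set z := Nat.card (center G) with hz
    have hzfilter : (Finset.univ.filter (· ∈ center G)).card = z := by
      rw [hz, Nat.card_eq_fintype_card, Fintype.card_subtype]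
    have hnzfilter : (Finset.univ.filter (· ∉ center G)).card = n - z := by
      have := Finset.card_filter_add_card_filter_not
        (s := (Finset.univ : Finset G)) (p := (· ∈ center G))
      rw [Finset.card_univ, ← Nat.card_eq_fintype_card] at this
      omega
    have h1 : ∑ g ∈ Finset.univ.filter (· ∈ center G),
        Nat.card { x : G // g * x = x * g } ≤ z * n := by
      calc _ ≤ ∑ _g ∈ Finset.univ.filter (· ∈ center G), n :=
            Finset.sum_le_sum fun g _ => hbound' g
        _ = z * n := by rw [Finset.sum_const, smul_eq_mul, hzfilter]
    have h2 : ∑ g ∈ Finset.univ.filter (· ∉ center G),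
        2 * Nat.card { x : G // g * x = x * g } ≤ (n - z) * n := by
      calc _ ≤ ∑ _g ∈ Finset.univ.filter (· ∉ center G), n :=
            Finset.sum_le_sum fun g hg => hbound g (Finset.mem_filter.mp hg).2
        _ = (n - z) * n := by rw [Finset.sum_const, smul_eq_mul, hnzfilter]
    have h2' : 2 * ∑ g ∈ Finset.univ.filter (· ∉ center G),
        Nat.card { x : G // g * x = x * g } ≤ (n - z) * n := by
      rw [Finset.mul_sum]; exact h2
    rw [hsplit]
    have hzn : z ≤ n := by omega
    obtain ⟨m, hm⟩ : ∃ m, n = m + z := ⟨n - z, by omega⟩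
    rw [show n - z = m by omega] at h2'
    have h4 : 3 * z ≤ m := by omega
    nlinarith [h1, h2', Nat.mul_le_mul_right n h4]
  -- derive contradiction with h
  have hq : (Nat.card { p : G × G // p.1 * p.2 = p.2 * p.1 } : ℚ) ≤ 5 / 8 * (n : ℚ) ^ 2 := by
    have : ((8 * Nat.card { p : G × G // p.1 * p.2 = p.2 * p.1 } : ℕ) : ℚ) ≤
        ((5 * n ^ 2 : ℕ) : ℚ) := Nat.cast_le.mpr key
    push_cast at this
    linarith
  rw [hn] at hq
  exact absurd hq (not_le.mpr h)
end

section
/- For a finite non-abelian group G, the number of conjugacy classes of G is at most (5/8)·|G|. -/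
open ConjClasses

theorem card_conjClasses_le_five_eighths (G : Type*) [Group G] [Finite G]
    (h : ¬ ∀ g h : G, g * h = h * g) :
    (Nat.card (ConjClasses G) : ℚ) ≤ 5 / 8 * (Nat.card G : ℚ) := by
  classical
  cases nonempty_fintype G
  set Z := Subgroup.center G
  -- index of center ≥ 4
  have hindex : 4 ≤ Z.index := by
    by_contra hlt
    push_neg at hlt
    have hpos : 0 < Z.index := Nat.pos_of_ne_zero (Subgroup.index_ne_zero_of_finite)
    have hcard : Nat.card (G ⧸ Z) = Z.index := rfl
    have hcyc : IsCyclic (G ⧸ Z) := by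
      interval_cases hi : Z.index
      · haveI : Subsingleton (G ⧸ Z) := (Nat.card_eq_one_iff_unique.mp (by omega)).1
        infer_instance
      · exact isCyclic_of_prime_card (p := 2) (by omega)
      · exact isCyclic_of_prime_card (p := 3) (by omega)
    exact h fun g h' => commutative_of_cyclic_center_quotient (QuotientGroup.mk' Z)
      (by rw [QuotientGroup.ker_mk']) g h'
  have hzn : 4 * Nat.card Z ≤ Nat.card G := by
    calc 4 * Nat.card Z ≤ Z.index * Nat.card Z := Nat.mul_le_mul_right _ hindex
    _ = Nat.card G := by rw [mul_comm, Z.card_mul_index]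
  -- class counting: 2 * k ≤ n + z
  have hclass : Nat.card Z + ∑ᶠ x ∈ noncenter G, Nat.card x.carrier = Nat.card G :=
    Group.nat_card_center_add_sum_card_noncenter_eq_card G
  have hk : Nat.card (ConjClasses G) = Nat.card Z + (noncenter G).toFinset.card := by
    have h1 : Fintype.card Z = Fintype.card ((noncenter G)ᶜ : Set (ConjClasses G)) :=
      Fintype.card_congr ((mk_bijOn G).equiv _)
    have h2 : Fintype.card ((noncenter G)ᶜ : Set (ConjClasses G))
        + Fintype.card (noncenter G) = Fintype.card (ConjClasses G) := by
      have hle : Fintype.card (noncenter G) ≤ Fintype.card (ConjClasses G) :=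
        Fintype.card_le_of_injective Subtype.val Subtype.val_injective
      rw [Fintype.card_compl_set]
      omega
    rw [Nat.card_eq_fintype_card, Nat.card_eq_fintype_card, h1, ← h2, Set.toFinset_card]
  have hsum : 2 * (noncenter G).toFinset.card ≤ ∑ᶠ x ∈ noncenter G, Nat.card x.carrier := by
    have he : ∑ᶠ x ∈ noncenter G, Nat.card x.carrier
        = ∑ x ∈ (noncenter G).toFinset, Nat.card x.carrier := by
      rw [← finsum_mem_coe_finset, Set.coe_toFinset]
    rw [he]
    calc 2 * (noncenter G).toFinset.card = ∑ _x ∈ (noncenter G).toFinset, 2 := by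
          rw [Finset.sum_const, smul_eq_mul, mul_comm]
      _ ≤ _ := Finset.sum_le_sum fun x hx => by
          have hnt : x.carrier.Nontrivial := (Set.mem_toFinset (s := noncenter G)).mp hx
          have h1 : 1 < x.carrier.ncard :=
            (Set.one_lt_ncard (Set.toFinite _)).mpr
              (let ⟨a, ha, b, hb, hab⟩ := hnt; ⟨a, ha, b, hb, hab⟩)
          rw [Nat.card_coe_set_eq]
          omega
  have key : 2 * Nat.card (ConjClasses G) ≤ Nat.card G + Nat.card Z := by omega
  -- conclude
  have h8 : (8 : ℚ) * Nat.card (ConjClasses G) ≤ 5 * Nat.card G := by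
    have := calc 8 * Nat.card (ConjClasses G) = 4 * (2 * Nat.card (ConjClasses G)) := by ring
      _ ≤ 4 * (Nat.card G + Nat.card Z) := by omega
      _ = 4 * Nat.card G + 4 * Nat.card Z := by ring
      _ ≤ 4 * Nat.card G + Nat.card G := by omega
      _ = 5 * Nat.card G := by ring
    exact_mod_cast this
  linarith
end

section
/- For any finite group G, the number of 4-tuples (g₁,g₂,g₃,g₄) in G⁴ satisfying g₁g₂g₃g₁⁻¹g₄g₃⁻¹g₂⁻¹g₄⁻¹ = 1 equals the number of pairs (g,h) in G² satisfying ghg⁻¹h⁻¹ = 1 multiplied by |G|². -/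
theorem card_surface_word_eq (G : Type*) [Group G] [Finite G] :
    Nat.card { t : G × G × G × G //
        t.1 * t.2.1 * t.2.2.1 * t.1⁻¹ * t.2.2.2 * t.2.2.1⁻¹ * t.2.1⁻¹ * t.2.2.2⁻¹ = 1 } =
      Nat.card { p : G × G // p.1 * p.2 * p.1⁻¹ * p.2⁻¹ = 1 } * Nat.card G ^ 2 := by
  have e : { t : G × G × G × G //
        t.1 * t.2.1 * t.2.2.1 * t.1⁻¹ * t.2.2.2 * t.2.2.1⁻¹ * t.2.1⁻¹ * t.2.2.2⁻¹ = 1 } ≃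
      { p : G × G // p.1 * p.2 * p.1⁻¹ * p.2⁻¹ = 1 } × G × G :=
    { toFun := fun ⟨⟨g1, g2, g3, g4⟩, h⟩ =>
        (⟨(g4⁻¹ * g1, g2 * g3), by
          have h' := congrArg (fun x => g4⁻¹ * x * g4) h
          simp only [mul_assoc] at h' ⊢
          simpa [mul_assoc] using h'⟩, g4, g3)
      invFun := fun ⟨⟨⟨a, b⟩, h⟩, u, v⟩ =>
        ⟨(u * a, b * v⁻¹, v, u), by
          have h' := congrArg (fun x => u * x * u⁻¹) h
          simp only [mul_assoc] at h' ⊢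
          simpa [mul_assoc] using h'⟩
      left_inv := fun ⟨⟨g1, g2, g3, g4⟩, h⟩ => by
        simp [mul_assoc]
      right_inv := fun ⟨⟨⟨a, b⟩, h⟩, u, v⟩ => by
        simp [mul_assoc] }
  rw [Nat.card_congr e, Nat.card_prod, Nat.card_prod, sq]
end

section
/- If G is a finite group such that for some n ≥ 2 and some permutation σ of {1,…,n} with σ not the identity, the number of n-tuples (a₁,…,aₙ) with a₁⋯aₙ = a_{σ(1)}⋯a_{σ(n)} exceeds (1/2 + 1/8)·|G|ⁿ, then G is abelian. (Case k = 1: σ is a single block transposition.) -/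
/-!
A nontrivial permutation has an inversion: two letters `x = aᵢ`, `y = aⱼ` that occur as `… x … y …`
on the left-hand side and as `… y … x …` on the right-hand side. Once all other letters are fixed,
the identity reads `α x β y γ = α' y β' x γ'`, which says that `y` conjugates `β' x γ' γ⁻¹` to a
prescribed element. For fixed `x` there are at most `|C(β' x γ' γ⁻¹)|` such `y`, and summing over
`x` gives at most the number of commuting pairs, so the solutions have density at most the
commuting probability of `G`. For nonabelian `G` that is at most `5/8`: `G / Z(G)` is not cyclic,
so `|G : Z(G)| ≥ 4`, and every noncentral element has a proper centralizer.
-/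

open Function Subgroup

section CommutingPairs

variable {G : Type*} [Group G]

lemma card_commute_eq_sum_card_centralizer [Fintype G] :
    Nat.card {p : G × G // Commute p.1 p.2} = ∑ g : G, Nat.card (centralizer {g}) := by
  rw [Nat.card_congr (Equiv.subtypeProdEquivSigmaSubtype Commute), Nat.card_sigma]
  refine Finset.sum_congr rfl fun g _ => Nat.card_congr (Equiv.subtypeEquivRight fun k => ?_)
  rw [mem_centralizer_singleton_iff]
  exact eq_comm

lemma mul_eq_swap_iff_conj_eq (α β γ α' β' γ' x y : G) :
    α * x * β * y * γ = α' * y * β' * x * γ' ↔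
      y * (β' * x * γ' * γ⁻¹) * y⁻¹ = α'⁻¹ * α * x * β := by
  have e₁ : α' * (y * (β' * x * γ' * γ⁻¹)) * γ = α' * y * β' * x * γ' := by group
  have e₂ : α' * (α'⁻¹ * α * x * β * y) * γ = α * x * β * y * γ := by group
  rw [Iff.comm, mul_inv_eq_iff_eq_mul, ← mul_left_cancel_iff (a := α'),
    ← mul_right_cancel_iff (a := γ), e₁, e₂, eq_comm]

variable [Finite G]

lemma Subgroup.four_le_index_center (hG : ¬ IsMulCommutative G) : 4 ≤ (center G).index := by
  have hcyc : ¬ IsCyclic (G ⧸ center G) := fun _ =>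
    hG (isMulCommutative_of_isCyclic_quotient_center_self G)
  have hprime : ¬ (center G).index.Prime := fun hp =>
    hcyc (@isCyclic_of_prime_card _ _ _ ⟨hp⟩ (index_eq_card _).symm)
  have := one_lt_index_of_ne_top (mt center_eq_top_iff.mp hG)
  by_contra! h
  interval_cases (center G).index <;> norm_num at hprime

lemma Subgroup.two_mul_card_centralizer_le {g : G} (hg : g ∉ center G) :
    2 * Nat.card (centralizer {g}) ≤ Nat.card G := by
  have hne : centralizer {g} ≠ ⊤ := fun h =>
    hg (mem_center_iff.mpr fun k => mem_centralizer_singleton_iff.mp (h ▸ mem_top k))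
  rw [← card_mul_index (centralizer {g}), mul_comm]
  exact Nat.mul_le_mul_left _ (one_lt_index_of_ne_top hne)

lemma commProb_le_five_eighths (hG : ¬ IsMulCommutative G) : commProb G ≤ 5 / 8 := by
  classical
  have := Fintype.ofFinite G
  have hfiber : ∀ g : G, 2 * Nat.card (centralizer {g}) ≤
      Nat.card G + if g ∈ center G then Nat.card G else 0 := by
    intro g
    split_ifs with hg
    · have := Nat.card_le_card_of_injective _ (centralizer {g}).subtype_injective
      omega
    · simpa using two_mul_card_centralizer_le hg
  have hsum : 2 * Nat.card {p : G × G // Commute p.1 p.2} ≤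
      Nat.card G * Nat.card G + Nat.card (center G) * Nat.card G := by
    rw [card_commute_eq_sum_card_centralizer, Finset.mul_sum]
    refine (Finset.sum_le_sum fun g _ => hfiber g).trans_eq ?_
    rw [Finset.sum_add_distrib, Finset.sum_ite, Finset.sum_const_zero]
    simp [Nat.card_eq_fintype_card, Fintype.card_subtype]
  have hZ : 4 * Nat.card (center G) ≤ Nat.card G := by
    rw [← card_mul_index (center G), mul_comm]
    exact Nat.mul_le_mul_left _ (four_le_index_center hG)
  have hcount : 8 * Nat.card {p : G × G // Commute p.1 p.2} ≤ 5 * Nat.card G ^ 2 := by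
    nlinarith
  rw [commProb_def, div_le_iff₀ (by exact_mod_cast pow_pos Nat.card_pos 2)]
  have : (8 : ℚ) * Nat.card {p : G × G // Commute p.1 p.2} ≤ 5 * Nat.card G ^ 2 := by
    exact_mod_cast hcount
  linarith

lemma card_conj_eq_le_card_centralizer (u z : G) :
    Nat.card {y : G // y * u * y⁻¹ = z} ≤ Nat.card (centralizer {u}) := by
  rcases isEmpty_or_nonempty {y : G // y * u * y⁻¹ = z} with h | ⟨y₀, hy₀⟩
  · simp
  refine Nat.card_le_card_of_injective (fun y => ⟨y₀⁻¹ * y.1, ?_⟩) fun y y' h => ?_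
  · have h := y.2.trans hy₀.symm
    rw [mul_inv_eq_iff_eq_mul] at h
    rw [mem_centralizer_singleton_iff, mul_assoc, h]
    group
  · exact Subtype.ext (mul_left_cancel (congrArg Subtype.val h))

lemma card_mul_eq_swap_le_card_commute (α β γ α' β' γ' : G) :
    Nat.card {p : G × G // α * p.1 * β * p.2 * γ = α' * p.2 * β' * p.1 * γ'} ≤
      Nat.card {p : G × G // Commute p.1 p.2} := by
  have := Fintype.ofFinite G
  simp_rw [mul_eq_swap_iff_conj_eq]
  rw [Nat.card_congr (Equiv.subtypeProdEquivSigmaSubtype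
    fun x y => y * (β' * x * γ' * γ⁻¹) * y⁻¹ = α'⁻¹ * α * x * β), Nat.card_sigma,
    card_commute_eq_sum_card_centralizer]
  calc ∑ x : G, Nat.card {y // y * (β' * x * γ' * γ⁻¹) * y⁻¹ = α'⁻¹ * α * x * β}
      ≤ ∑ x : G, Nat.card (centralizer {β' * x * γ' * γ⁻¹}) :=
        Finset.sum_le_sum fun x _ => card_conj_eq_le_card_centralizer _ _
    _ = ∑ g : G, Nat.card (centralizer {g}) :=
        Fintype.sum_equiv ((Equiv.mulRight (γ' * γ⁻¹)).trans (Equiv.mulLeft β')) _ _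
          fun x => by simp [mul_assoc]

end CommutingPairs

lemma card_mul_sq_le_of_card_slice_le {ι α : Type*} [Fintype ι] [DecidableEq ι] [Finite α]
    {i j : ι} (hij : i ≠ j) (S : Set (ι → α)) (c : ℕ)
    (hS : ∀ a, Nat.card {p : α × α // update (update a i p.1) j p.2 ∈ S} ≤ c) :
    Nat.card S * Nat.card α ^ 2 ≤ c * Nat.card α ^ Fintype.card ι := by
  have := Fintype.ofFinite α
  have hrestore : ∀ (a : ι → α) (x y : α),
      update (update (update (update a i x) j y) i (a i)) j (a j) = a := by
    intro a x y
    ext k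
    by_cases hkj : k = j
    · subst hkj; simp
    · by_cases hki : k = i
      · subst hki; simp [hkj]
      · simp [hki, hkj]
  let τ : (ι → α) × (α × α) → (ι → α) × (α × α) :=
    fun q => (update (update q.1 i q.2.1) j q.2.2, q.1 i, q.1 j)
  have hτ : Involutive τ := fun ⟨a, x, y⟩ => by
    simp only [τ, update_self, update_of_ne hij, hrestore]
  calc Nat.card S * Nat.card α ^ 2
      = Nat.card {q : (ι → α) × (α × α) // q.1 ∈ S} := by
        rw [Nat.card_congr Equiv.prodSubtypeFstEquivSubtypeProd, Nat.card_prod, Nat.card_prod, sq]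
    _ = Nat.card {q : (ι → α) × (α × α) // update (update q.1 i q.2.1) j q.2.2 ∈ S} :=
        Nat.card_congr ((hτ.toPerm τ).subtypeEquiv fun ⟨a, x, y⟩ => by simp [τ, hrestore])
    _ = ∑ a : ι → α, Nat.card {p : α × α // update (update a i p.1) j p.2 ∈ S} := by
        rw [Nat.card_congr (Equiv.subtypeProdEquivSigmaSubtype
          fun a (p : α × α) => update (update a i p.1) j p.2 ∈ S), Nat.card_sigma]
    _ ≤ ∑ _a : ι → α, c := Finset.sum_le_sum fun a _ => hS a
    _ = c * Nat.card α ^ Fintype.card ι := by simp [mul_comm]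

section Words

open List

lemma List.exists_prod_map_eq_of_pair_sublist {ι M : Type*} [Monoid M] {l : List ι}
    (hl : l.Nodup) {i j : ι} (h : [i, j] <+ l) (a : ι → M) :
    ∃ α β γ : M, ∀ b : ι → M, (∀ k, k ≠ i → k ≠ j → b k = a k) →
      (l.map b).prod = α * b i * β * b j * γ := by
  obtain ⟨r₁, r₂, rfl, hi, hj⟩ := cons_sublist_iff.mp h
  obtain ⟨A, B, rfl⟩ := append_of_mem hi
  obtain ⟨C, D, rfl⟩ := append_of_mem (singleton_sublist.mp hj)
  refine ⟨(A.map a).prod, (B.map a).prod * (C.map a).prod, (D.map a).prod, fun b hb => ?_⟩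
  have hmap : ∀ L : List ι, i ∉ L → j ∉ L → L.map b = L.map a := fun L hiL hjL =>
    map_congr_left fun k hk => hb k (ne_of_mem_of_not_mem hk hiL) (ne_of_mem_of_not_mem hk hjL)
  simp only [map_append, map_cons, prod_append, prod_cons]
  rw [hmap A (by grind) (by grind), hmap B (by grind) (by grind), hmap C (by grind) (by grind),
    hmap D (by grind) (by grind)]
  simp only [mul_assoc]

lemma List.pair_sublist_finRange {n : ℕ} {p q : Fin n} (hpq : p < q) : [p, q] <+ finRange n :=
  sublist_of_subperm_of_pairwise (subperm_of_subset (by simp [hpq.ne]) (by simp))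
    (by simp [hpq]) (pairwise_lt_finRange n)

lemma card_prod_map_eq_mul_sq_le {ι G : Type*} [Group G] [Finite G] [Fintype ι] [DecidableEq ι]
    {l₁ l₂ : List ι} (h₁ : l₁.Nodup) (h₂ : l₂.Nodup) {i j : ι} (hij₁ : [i, j] <+ l₁)
    (hji₂ : [j, i] <+ l₂) :
    Nat.card {a : ι → G // (l₁.map a).prod = (l₂.map a).prod} * Nat.card G ^ 2 ≤
      Nat.card {p : G × G // Commute p.1 p.2} * Nat.card G ^ Fintype.card ι := by
  have hij : i ≠ j := by simpa using hij₁.nodup h₁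
  refine card_mul_sq_le_of_card_slice_le hij {a | (l₁.map a).prod = (l₂.map a).prod} _ fun a => ?_
  obtain ⟨α, β, γ, hα⟩ := exists_prod_map_eq_of_pair_sublist h₁ hij₁ a
  obtain ⟨α', β', γ', hα'⟩ := exists_prod_map_eq_of_pair_sublist h₂ hji₂ a
  refine (Nat.card_congr (Equiv.subtypeEquivRight fun p => ?_)).trans_le
    (card_mul_eq_swap_le_card_commute α β γ α' β' γ')
  have hb : ∀ k, k ≠ i → k ≠ j → update (update a i p.1) j p.2 k = a k := fun k hki hkj => by
    simp [hki, hkj]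
  rw [Set.mem_ofPred_eq, hα _ hb, hα' _ fun k hkj hki => hb k hki hkj]
  simp [hij]

end Words

lemma Equiv.Perm.exists_lt_and_lt_of_ne_one {n : ℕ} {σ : Equiv.Perm (Fin n)} (hσ : σ ≠ 1) :
    ∃ p q, p < q ∧ σ q < σ p := by
  by_contra! h
  refine hσ ((Equiv.Perm.monotone_iff σ).mp fun p q hpq => ?_)
  rcases hpq.lt_or_eq with hlt | rfl
  · exact h p q hlt
  · exact le_rfl

lemma card_ofFn_prod_eq_perm_le_commProb_mul {G : Type*} [Group G] [Finite G] {n : ℕ}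
    {σ : Equiv.Perm (Fin n)} (hσ : σ ≠ 1) :
    (Nat.card {a : Fin n → G // (List.ofFn a).prod = (List.ofFn fun i => a (σ i)).prod} : ℚ) ≤
      commProb G * Nat.card G ^ n := by
  obtain ⟨p, q, hpq, hσqp⟩ := σ.exists_lt_and_lt_of_ne_one hσ
  have hcard := card_prod_map_eq_mul_sq_le (G := G) (List.nodup_finRange n)
    ((List.nodup_finRange n).map σ.injective) (List.pair_sublist_finRange hσqp)
    ((List.pair_sublist_finRange hpq).map σ)
  simp only [List.map_map] at hcard
  simp only [Fintype.card_fin, Function.comp_def, ← List.ofFn_eq_map] at hcard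
  have hG : (0 : ℚ) < Nat.card G ^ 2 := by exact_mod_cast pow_pos Nat.card_pos 2
  rw [commProb_def, div_mul_eq_mul_div, le_div_iff₀ hG]
  exact_mod_cast hcard

theorem abelian_of_word_count_gt (G : Type*) [Group G] [Finite G]
    (h : ∃ n : ℕ, 2 ≤ n ∧ ∃ σ : Equiv.Perm (Fin n), σ ≠ 1 ∧
      (Nat.card { a : Fin n → G //
          (List.ofFn a).prod = (List.ofFn fun i => a (σ i)).prod } : ℚ) >
        (1 / 2 + 1 / 8) * (Nat.card G : ℚ) ^ n) :
    ∀ g h : G, g * h = h * g := by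
  obtain ⟨n, -, σ, hσ, hcount⟩ := h
  suffices IsMulCommutative G from fun g h => mul_comm' g h
  by_contra hG
  have hN : (0 : ℚ) < Nat.card G ^ n := by exact_mod_cast pow_pos Nat.card_pos n
  have := card_ofFn_prod_eq_perm_le_commProb_mul (G := G) hσ
  nlinarith [commProb_le_five_eighths hG]
end
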